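/- (Standard-measurement special case: Maassen–Uffink bound.) Let {e_i}_{i=1}^d and {f_j}_{j=1}^d be two orthonormal bases of ℂ^d and let ψ ∈ ℂ^d be a unit vector. Define p_i := |⟨e_i, ψ⟩|² and q_j := |⟨f_j, ψ⟩|². Then H(p) + H(q) ≥ −2 log₂ max_{i,j} |⟨e_i, f_j⟩|. -/

import Mathlib

/-!
Write `a i = ⟪e i, ψ⟫`, `b j = ⟪f j, ψ⟫` and `U i j = ⟪e i, f j⟫`, and let `c = max ‖U i j‖`.
The entire function
`F z = tiltedPairing e f ψ z = ∑ i j, conj (a i) ‖a i‖ ^ z * U i j * b j ‖b j‖ ^ z`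
satisfies `F 0 = ‖ψ‖ ^ 2 = 1`; on the line `re z = 0` its two coefficient vectors have `ℓ²`-norm
one, so `‖F z‖ ≤ 1` by Cauchy–Schwarz; on the line `re z = 1` they are the probability vectors
`‖a i‖ ^ 2`, `‖b j‖ ^ 2`, so `‖F z‖ ≤ c`. By the three-lines theorem `‖F s‖ ≤ c ^ s` on `[0, 1]`,
and comparing derivatives at `s = 0` gives `re (F' 0) ≤ log c`. By Parseval,
`F' 0 = ∑ ‖a i‖ ^ 2 log ‖a i‖ + ∑ ‖b j‖ ^ 2 log ‖b j‖`, which is minus half the sum of the two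
entropies in nats. This is the endpoint case of the Riesz–Thorin argument of Maassen and Uffink.
-/

open BigOperators

noncomputable section

/-- Base-2 Shannon entropy of a finite vector. -/
def H2 {n : ℕ} (p : Fin n → ℝ) : ℝ := -∑ i, p i * Real.logb 2 (p i)

open Finset Complex Topology
open scoped InnerProductSpace ComplexConjugate

/-- `a * ‖a‖ ^ z`, written with `exp` so that it is entire in `z` also when `a = 0`. -/
def mulNormPow (a z : ℂ) : ℂ := a * exp (z * Real.log ‖a‖)

section MulNormPow

variable (a : ℂ) {z : ℂ}

lemma differentiable_mulNormPow : Differentiable ℂ (mulNormPow a) :=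
  ((differentiable_id.mul_const _).cexp).const_mul a

lemma mulNormPow_zero : mulNormPow a 0 = a := by
  simp [mulNormPow]

lemma hasDerivAt_mulNormPow : HasDerivAt (mulNormPow a) (a * Real.log ‖a‖) 0 := by
  have h := (((hasDerivAt_id (0 : ℂ)).mul_const (Real.log ‖a‖ : ℂ)).cexp).const_mul a
  simp only [id, zero_mul, exp_zero, one_mul] at h
  exact h

lemma norm_mulNormPow : ‖mulNormPow a z‖ = ‖a‖ * Real.exp (z.re * Real.log ‖a‖) := by
  simp [mulNormPow, norm_exp]

lemma norm_mulNormPow_of_re_eq_zero (hz : z.re = 0) : ‖mulNormPow a z‖ = ‖a‖ := by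
  simp [norm_mulNormPow, hz]

lemma norm_mulNormPow_of_re_eq_one (hz : z.re = 1) : ‖mulNormPow a z‖ = ‖a‖ ^ 2 := by
  rcases eq_or_ne a 0 with rfl | ha
  · simp [norm_mulNormPow]
  · rw [norm_mulNormPow, hz, one_mul, Real.exp_log (norm_pos_iff.mpr ha), sq]

lemma norm_mulNormPow_le (hz : |z.re| ≤ 1) :
    ‖mulNormPow a z‖ ≤ ‖a‖ * Real.exp |Real.log ‖a‖| := by
  rw [norm_mulNormPow]
  gcongr
  exact (le_abs_self _).trans (by rw [abs_mul]; exact mul_le_of_le_one_left (abs_nonneg _) hz)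

end MulNormPow

open HadamardThreeLines in
theorem HasDerivAt.re_le_log_of_norm_le_on_strip {F : ℂ → ℂ} {D : ℂ} {c : ℝ} (hc : 0 < c)
    (hD : HasDerivAt F D 0) (hF : Differentiable ℂ F)
    (hB : BddAbove ((norm ∘ F) '' verticalClosedStrip 0 1))
    (h₀ : ∀ z ∈ re ⁻¹' {0}, ‖F z‖ ≤ 1) (h₁ : ∀ z ∈ re ⁻¹' {1}, ‖F z‖ ≤ c) (hF₀ : F 0 = 1) :
    D.re ≤ Real.log c := by
  set g : ℝ → ℝ := fun s => (F s).re - c ^ s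
  have hg : HasDerivAt g (D.re - c ^ (0 : ℝ) * Real.log c) 0 :=
    (hD.real_of_complex (z := 0)).sub (Real.hasStrictDerivAt_const_rpow hc 0).hasDerivAt
  have hg_nonpos : ∀ s ∈ Set.Icc (0 : ℝ) 1, g s ≤ 0 := fun s hs => by
    have hF_le := norm_le_interp_of_mem_verticalClosedStrip₀₁' F (z := s)
      (by simpa [verticalClosedStrip] using hs) hF.diffContOnCl hB h₀ h₁
    simp only [ofReal_re, Real.one_rpow, one_mul] at hF_le
    linarith [re_le_norm (F s)]
  have hslope_nonpos : ∀ᶠ t in 𝓝[>] (0 : ℝ), t⁻¹ • (g (0 + t) - g 0) ≤ 0 := by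
    filter_upwards [Ioo_mem_nhdsGT (zero_lt_one' ℝ)] with t ht
    have hg₀ : g 0 = 0 := by simp [g, hF₀]
    rw [zero_add, hg₀, sub_zero, smul_eq_mul]
    exact mul_nonpos_of_nonneg_of_nonpos (inv_nonneg.mpr ht.1.le) (hg_nonpos t ⟨ht.1.le, ht.2.le⟩)
  have hg'_nonpos := le_of_tendsto hg.tendsto_slope_zero_right hslope_nonpos
  simp only [Real.rpow_zero, one_mul] at hg'_nonpos
  linarith

namespace OrthonormalBasis

variable {𝕜 ι κ E : Type*} [RCLike 𝕜] [Fintype ι] [Fintype κ] [NormedAddCommGroup E]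
  [InnerProductSpace 𝕜 E]

lemma exists_inner_ne_zero (b : OrthonormalBasis ι 𝕜 E) {x : E} (hx : x ≠ 0) :
    ∃ i, ⟪b i, x⟫_𝕜 ≠ 0 := by
  by_contra! h
  exact hx (by simpa [h] using (b.sum_repr' x).symm)

lemma sum_conj_inner_mul_inner (b : OrthonormalBasis ι 𝕜 E) (x y : E) :
    ∑ i, conj ⟪b i, x⟫_𝕜 * ⟪b i, y⟫_𝕜 = ⟪x, y⟫_𝕜 := by
  simp only [inner_conj_symm]
  exact b.sum_inner_mul_inner x y

lemma norm_sum_sum_mul_inner_mul_le (e : OrthonormalBasis ι 𝕜 E) (f : OrthonormalBasis κ 𝕜 E)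
    (x : ι → 𝕜) (y : κ → 𝕜) :
    ‖∑ i, ∑ j, x i * ⟪e i, f j⟫_𝕜 * y j‖ ≤ √(∑ i, ‖x i‖ ^ 2) * √(∑ j, ‖y j‖ ^ 2) := by
  have h : ∑ i, ∑ j, x i * ⟪e i, f j⟫_𝕜 * y j =
      ⟪e.repr.symm (WithLp.toLp 2 (star x)), f.repr.symm (WithLp.toLp 2 y)⟫_𝕜 := by
    simp only [← OrthonormalBasis.sum_repr_symm, sum_inner, inner_sum, inner_smul_left,
      inner_smul_right]
    rw [Finset.sum_comm]
    simp [Finset.mul_sum, mul_comm, mul_left_comm]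
  rw [h]
  refine (norm_inner_le_norm _ _).trans_eq ?_
  simp [EuclideanSpace.norm_eq]

end OrthonormalBasis

section TiltedPairing

variable {ι κ E : Type*} [Fintype ι] [Fintype κ] [NormedAddCommGroup E] [InnerProductSpace ℂ E]
  (e : OrthonormalBasis ι ℂ E) (f : OrthonormalBasis κ ℂ E) (ψ : E)

def tiltedPairing (z : ℂ) : ℂ :=
  ∑ i, ∑ j, mulNormPow (conj ⟪e i, ψ⟫_ℂ) z * ⟪e i, f j⟫_ℂ * mulNormPow ⟪f j, ψ⟫_ℂ z

lemma differentiable_tiltedPairing : Differentiable ℂ (tiltedPairing e f ψ) :=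
  Differentiable.fun_sum fun _ _ => Differentiable.fun_sum fun _ _ =>
    ((differentiable_mulNormPow _).mul_const _).mul (differentiable_mulNormPow _)

lemma tiltedPairing_zero : tiltedPairing e f ψ 0 = (‖ψ‖ ^ 2 : ℝ) := by
  simp only [tiltedPairing, mulNormPow_zero, mul_assoc, ← mul_sum,
    OrthonormalBasis.sum_inner_mul_inner, conj_mul']
  rw [← e.sum_sq_norm_inner_right ψ]
  push_cast
  rfl

lemma hasDerivAt_tiltedPairing :
    HasDerivAt (tiltedPairing e f ψ)
      ((∑ i, ‖⟪e i, ψ⟫_ℂ‖ ^ 2 * Real.log ‖⟪e i, ψ⟫_ℂ‖ +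
        ∑ j, ‖⟪f j, ψ⟫_ℂ‖ ^ 2 * Real.log ‖⟪f j, ψ⟫_ℂ‖ : ℝ)) 0 := by
  have h := HasDerivAt.fun_sum (u := univ) fun i _ => HasDerivAt.fun_sum (u := univ) fun j _ =>
    ((hasDerivAt_mulNormPow (conj ⟪e i, ψ⟫_ℂ)).mul_const ⟪e i, f j⟫_ℂ).mul
      (hasDerivAt_mulNormPow ⟪f j, ψ⟫_ℂ)
  refine h.congr_deriv ?_
  simp only [mulNormPow_zero, RCLike.norm_conj, sum_add_distrib]
  rw [sum_comm (f := fun i j => conj ⟪e i, ψ⟫_ℂ * _ * _)]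
  have h₁ : ∀ i, ∑ j, conj ⟪e i, ψ⟫_ℂ * Real.log ‖⟪e i, ψ⟫_ℂ‖ * ⟪e i, f j⟫_ℂ * ⟪f j, ψ⟫_ℂ =
      ((‖⟪e i, ψ⟫_ℂ‖ ^ 2 * Real.log ‖⟪e i, ψ⟫_ℂ‖ : ℝ) : ℂ) := fun i => by
    simp only [mul_assoc, ← mul_sum, OrthonormalBasis.sum_inner_mul_inner]
    push_cast
    rw [← conj_mul']
    ring
  have h₂ : ∀ j, ∑ i, conj ⟪e i, ψ⟫_ℂ * ⟪e i, f j⟫_ℂ * (⟪f j, ψ⟫_ℂ * Real.log ‖⟪f j, ψ⟫_ℂ‖) =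
      ((‖⟪f j, ψ⟫_ℂ‖ ^ 2 * Real.log ‖⟪f j, ψ⟫_ℂ‖ : ℝ) : ℂ) := fun j => by
    simp only [← sum_mul, e.sum_conj_inner_mul_inner]
    rw [← inner_conj_symm ψ (f j)]
    push_cast
    rw [← conj_mul']
    ring
  simp only [h₁, h₂]
  push_cast
  rfl

lemma norm_tiltedPairing_le (z : ℂ) :
    ‖tiltedPairing e f ψ z‖ ≤ ∑ i, ∑ j,
      ‖mulNormPow (conj ⟪e i, ψ⟫_ℂ) z‖ * ‖⟪e i, f j⟫_ℂ‖ * ‖mulNormPow ⟪f j, ψ⟫_ℂ z‖ :=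
  (norm_sum_le _ _).trans <| sum_le_sum fun _ _ =>
    (norm_sum_le _ _).trans_eq <| by simp only [norm_mul]

lemma norm_tiltedPairing_le_of_re_eq_zero {z : ℂ} (hz : z.re = 0) :
    ‖tiltedPairing e f ψ z‖ ≤ ‖ψ‖ ^ 2 := by
  refine (e.norm_sum_sum_mul_inner_mul_le f _ _).trans_eq ?_
  simp only [norm_mulNormPow_of_re_eq_zero _ hz, RCLike.norm_conj, e.sum_sq_norm_inner_right,
    f.sum_sq_norm_inner_right, Real.sqrt_sq (norm_nonneg ψ), ← sq]

lemma norm_tiltedPairing_le_of_re_eq_one {c : ℝ} (hc : ∀ i j, ‖⟪e i, f j⟫_ℂ‖ ≤ c) {z : ℂ}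
    (hz : z.re = 1) : ‖tiltedPairing e f ψ z‖ ≤ c * ‖ψ‖ ^ 4 := by
  refine (norm_tiltedPairing_le e f ψ z).trans ?_
  simp only [norm_mulNormPow_of_re_eq_one _ hz, RCLike.norm_conj]
  calc _ ≤ ∑ i, ∑ j, ‖⟪e i, ψ⟫_ℂ‖ ^ 2 * c * ‖⟪f j, ψ⟫_ℂ‖ ^ 2 := by gcongr; exact hc _ _
    _ = c * ‖ψ‖ ^ 4 := by
      simp only [← sum_mul, ← mul_sum, e.sum_sq_norm_inner_right, f.sum_sq_norm_inner_right]
      ring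

open HadamardThreeLines in
lemma bddAbove_norm_tiltedPairing :
    BddAbove ((norm ∘ tiltedPairing e f ψ) '' verticalClosedStrip 0 1) := by
  refine ⟨∑ i, ∑ j, ‖⟪e i, ψ⟫_ℂ‖ * Real.exp |Real.log ‖⟪e i, ψ⟫_ℂ‖| * ‖⟪e i, f j⟫_ℂ‖ *
    (‖⟪f j, ψ⟫_ℂ‖ * Real.exp |Real.log ‖⟪f j, ψ⟫_ℂ‖|), ?_⟩
  rintro _ ⟨z, hz, rfl⟩
  have hz' : |z.re| ≤ 1 := abs_le.mpr ⟨by linarith [hz.1], hz.2⟩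
  refine (norm_tiltedPairing_le e f ψ z).trans ?_
  gcongr
  · exact (norm_mulNormPow_le _ hz').trans_eq (by rw [RCLike.norm_conj])
  · exact norm_mulNormPow_le _ hz'

end TiltedPairing

lemma Real.negMulLog_sq (r : ℝ) : Real.negMulLog (r ^ 2) = -2 * (r ^ 2 * Real.log r) := by
  rw [Real.negMulLog, Real.log_pow]
  push_cast
  ring

theorem OrthonormalBasis.neg_two_mul_log_le_sum_negMulLog_add_sum_negMulLog
    {ι κ E : Type*} [Fintype ι] [Fintype κ] [NormedAddCommGroup E] [InnerProductSpace ℂ E]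
    (e : OrthonormalBasis ι ℂ E) (f : OrthonormalBasis κ ℂ E) {ψ : E} (hψ : ‖ψ‖ = 1) {c : ℝ}
    (hc : ∀ i j, ‖⟪e i, f j⟫_ℂ‖ ≤ c) :
    -2 * Real.log c ≤
      ∑ i, Real.negMulLog (‖⟪e i, ψ⟫_ℂ‖ ^ 2) + ∑ j, Real.negMulLog (‖⟪f j, ψ⟫_ℂ‖ ^ 2) := by
  obtain ⟨i, hi⟩ := e.exists_inner_ne_zero (norm_ne_zero_iff.mp (hψ.trans_ne one_ne_zero))
  obtain ⟨j, hj⟩ := f.exists_inner_ne_zero (e.orthonormal.ne_zero i)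
  have hc₀ : 0 < c := (norm_pos_iff.mpr (by rwa [← inner_conj_symm, map_ne_zero])).trans_le (hc i j)
  have key := (hasDerivAt_tiltedPairing e f ψ).re_le_log_of_norm_le_on_strip hc₀
    (differentiable_tiltedPairing e f ψ) (bddAbove_norm_tiltedPairing e f ψ)
    (fun z hz => by simpa [hψ] using norm_tiltedPairing_le_of_re_eq_zero e f ψ hz)
    (fun z hz => by simpa [hψ] using norm_tiltedPairing_le_of_re_eq_one e f ψ hc hz)
    (by simp [tiltedPairing_zero, hψ])
  simp only [ofReal_re] at key
  simp only [Real.negMulLog_sq, ← mul_sum]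
  linarith

lemma inner_toLp_toLp_eq_sum_conj_mul {ι : Type*} [Fintype ι] (x y : ι → ℂ) :
    ⟪WithLp.toLp 2 x, WithLp.toLp 2 y⟫_ℂ = ∑ k, conj (x k) * y k := by
  simp [EuclideanSpace.inner_toLp_toLp, dotProduct, mul_comm]

lemma exists_orthonormalBasis_of_sum_conj_mul_eq_ite {ι : Type*} [Fintype ι] [DecidableEq ι]
    (e : ι → ι → ℂ) (he : ∀ i j, ∑ k, conj (e i k) * e j k = if i = j then (1 : ℂ) else 0) :
    ∃ b : OrthonormalBasis ι ℂ (EuclideanSpace ℂ ι), ∀ i, b i = WithLp.toLp 2 (e i) := by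
  have hon : Orthonormal ℂ fun i => WithLp.toLp 2 (e i) := by
    rw [orthonormal_iff_ite]
    intro i j
    rw [inner_toLp_toLp_eq_sum_conj_mul, he]
  exact ⟨.mk hon (hon.linearIndependent.span_eq_top_of_card_eq_finrank' (by simp)).ge,
    fun i => by simp⟩

lemma norm_toLp_eq_one {ι : Type*} [Fintype ι] {ψ : ι → ℂ} (hψ : ∑ k, conj (ψ k) * ψ k = 1) :
    ‖WithLp.toLp 2 ψ‖ = 1 := by
  have h : ‖WithLp.toLp 2 ψ‖ ^ 2 = 1 := by
    rw [@norm_sq_eq_re_inner ℂ, inner_toLp_toLp_eq_sum_conj_mul, hψ, RCLike.one_re]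
  exact (pow_eq_one_iff_of_nonneg (norm_nonneg _) two_ne_zero).mp h

lemma H2_eq_sum_negMulLog_div_log_two {n : ℕ} (p : Fin n → ℝ) :
    H2 p = (∑ i, Real.negMulLog (p i)) / Real.log 2 := by
  simp only [H2, Real.negMulLog, Real.logb, sum_div, ← sum_neg_distrib]
  congr 1; ext; ring

/-- standard-measurement special case: Maassen–Uffink bound: for two
orthonormal bases `{e_i}`, `{f_j}` of `ℂ^d` and a unit vector `ψ`, the outcome
distributions `p_i = |⟨e_i, ψ⟩|²`, `q_j = |⟨f_j, ψ⟩|²` satisfy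
`H(p) + H(q) ≥ -2 log₂ max_{i,j} |⟨e_i, f_j⟩|`. -/
theorem maassen_uffink {d : ℕ} (hd : 0 < d)
    (e f : Fin d → Fin d → ℂ) (ψ : Fin d → ℂ)
    (he : ∀ i j, ∑ k, (starRingEnd ℂ) (e i k) * e j k = if i = j then (1 : ℂ) else 0)
    (hf : ∀ i j, ∑ k, (starRingEnd ℂ) (f i k) * f j k = if i = j then (1 : ℂ) else 0)
    (hψ : ∑ k, (starRingEnd ℂ) (ψ k) * ψ k = 1) :
    -2 * Real.logb 2
        (Finset.univ.sup'
          (Finset.univ_nonempty_iff.mpr ⟨((⟨0, hd⟩ : Fin d), (⟨0, hd⟩ : Fin d))⟩)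
          (fun ij : Fin d × Fin d => ‖∑ k, (starRingEnd ℂ) (e ij.1 k) * f ij.2 k‖))
      ≤ H2 (fun i => ‖∑ k, (starRingEnd ℂ) (e i k) * ψ k‖ ^ 2)
        + H2 (fun j => ‖∑ k, (starRingEnd ℂ) (f j k) * ψ k‖ ^ 2) := by
  obtain ⟨u, hu⟩ := exists_orthonormalBasis_of_sum_conj_mul_eq_ite e he
  obtain ⟨v, hv⟩ := exists_orthonormalBasis_of_sum_conj_mul_eq_ite f hf
  have : Nonempty (Fin d) := ⟨⟨0, hd⟩⟩
  have key := u.neg_two_mul_log_le_sum_negMulLog_add_sum_negMulLog v (norm_toLp_eq_one hψ)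
    (c := univ.sup' univ_nonempty fun ij : Fin d × Fin d => ‖⟪u ij.1, v ij.2⟫_ℂ‖)
    fun i j => le_sup' (fun ij : Fin d × Fin d => ‖⟪u ij.1, v ij.2⟫_ℂ‖) (mem_univ (i, j))
  simp only [hu, hv, inner_toLp_toLp_eq_sum_conj_mul] at key
  rw [H2_eq_sum_negMulLog_div_log_two, H2_eq_sum_negMulLog_div_log_two, ← add_div, Real.logb,
    mul_div_assoc']
  exact div_le_div_of_nonneg_right key (Real.log_nonneg one_le_two)
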